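/- arXiv:0711.1546 — 4 statements merged into one kernel-verified Lean document; each statement's English description precedes it below -/
import Mathlib

section
/- Let p be an odd prime and α ≥ 1 an integer. For any matrices A, B ∈ M₂(ℤ/p^{α+2}ℤ), the matrix X = I + p^α·A + p^{α+1}·B satisfies X^p = I + p^{α+1}·A in M₂(ℤ/p^{α+2}ℤ). -/
/-- Let `p` be an odd prime and `α ≥ 1`. For any matrices
`A, B ∈ M₂(ℤ/p^(α+2)ℤ)`, the matrix `X = I + p^α • A + p^(α+1) • B` satisfies
`X ^ p = I + p^(α+1) • A` in `M₂(ℤ/p^(α+2)ℤ)`. -/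
theorem stmt1 (p α : ℕ) (hp : p.Prime) (hodd : Odd p) (hα : 1 ≤ α)
    (A B : Matrix (Fin 2) (Fin 2) (ZMod (p ^ (α + 2)))) :
    (1 + ((p : ZMod (p ^ (α + 2))) ^ α) • A + ((p : ZMod (p ^ (α + 2))) ^ (α + 1)) • B) ^ p
      = 1 + ((p : ZMod (p ^ (α + 2))) ^ (α + 1)) • A := by
  have hp3 : 3 ≤ p := by
    have h2 : p ≠ 2 := by rintro rfl; exact (by decide : ¬ Odd 2) hodd
    have := hp.two_le; omega
  set q : ZMod (p ^ (α + 2)) := (p : ZMod (p ^ (α + 2))) with hqdef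
  have hq : ∀ k, α + 2 ≤ k → q ^ k = 0 := by
    intro k hk
    have h0 : q ^ (α + 2) = 0 := by
      have := ZMod.natCast_self (p ^ (α + 2))
      rwa [Nat.cast_pow] at this
    calc q ^ k = q ^ (α + 2) * q ^ (k - (α + 2)) := by rw [← pow_add]; congr 1; omega
    _ = 0 := by rw [h0, zero_mul]
  set C : Matrix (Fin 2) (Fin 2) (ZMod (p ^ (α + 2))) := A + q • B with hC
  have hM : q ^ α • A + q ^ (α + 1) • B = q ^ α • C := by
    rw [hC, smul_add, smul_smul, ← pow_succ]
  rw [add_assoc, hM, add_comm 1 (q ^ α • C),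
    (Commute.one_right (q ^ α • C)).add_pow p]
  have key : ∀ m : ℕ, (q ^ α • C) ^ m = q ^ (α * m) • C ^ m := by
    intro m; rw [smul_pow, ← pow_mul]
  have hchoose : (Nat.choose p 2 : Matrix (Fin 2) (Fin 2) (ZMod (p ^ (α + 2))))
      = ((Nat.choose p 2 : ZMod (p ^ (α + 2)))) • 1 := by
    rw [Nat.cast_smul_eq_nsmul, nsmul_eq_mul, mul_one]
  rw [Finset.range_eq_Ico, ← Finset.sum_Ico_consecutive _ (Nat.zero_le 3) (by omega : 3 ≤ p + 1)]
  have h1 : ∑ m ∈ Finset.Ico 3 (p + 1), (q ^ α • C) ^ m * 1 ^ (p - m) * (Nat.choose p m : Matrix (Fin 2) (Fin 2) (ZMod (p ^ (α + 2)))) = 0 := by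
    apply Finset.sum_eq_zero
    intro m hm
    rw [Finset.mem_Ico] at hm
    rw [key, hq (α * m) (by nlinarith), zero_smul, zero_mul, zero_mul]
  rw [h1, add_zero]
  have h0 : ∑ m ∈ Finset.Ico 0 3, (q ^ α • C) ^ m * 1 ^ (p - m) * (Nat.choose p m : Matrix (Fin 2) (Fin 2) (ZMod (p ^ (α + 2))))
      = 1 + q ^ (α + 1) • C := by
    rw [show Finset.Ico 0 3 = Finset.range 3 from rfl, Finset.sum_range_succ,
      Finset.sum_range_succ, Finset.sum_range_succ, Finset.sum_range_zero]
    have t0 : (q ^ α • C) ^ 0 * 1 ^ (p - 0) * (Nat.choose p 0 : Matrix (Fin 2) (Fin 2) (ZMod (p ^ (α + 2)))) = 1 := by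
      simp
    have t1 : (q ^ α • C) ^ 1 * 1 ^ (p - 1) * (Nat.choose p 1 : Matrix (Fin 2) (Fin 2) (ZMod (p ^ (α + 2)))) = q ^ (α + 1) • C := by
      rw [pow_one, one_pow, mul_one, Nat.choose_one_right]
      rw [smul_mul_assoc, ← Nat.cast_commute p C |>.eq, ← nsmul_eq_mul,
        ← Nat.cast_smul_eq_nsmul (ZMod (p ^ (α + 2))), smul_smul, ← hqdef, ← pow_succ]
    have t2 : (q ^ α • C) ^ 2 * 1 ^ (p - 2) * (Nat.choose p 2 : Matrix (Fin 2) (Fin 2) (ZMod (p ^ (α + 2)))) = 0 := by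
      obtain ⟨m, hm⟩ := hp.dvd_choose_self (k := 2) (by norm_num) (by omega)
      rw [key, one_pow, mul_one, hchoose, mul_smul_comm, mul_one, smul_smul,
        hm, Nat.cast_mul]
      have hz : (p : ZMod (p ^ (α + 2))) * (m : ZMod (p ^ (α + 2))) * q ^ (α * 2) = 0 := by
        have : (p : ZMod (p ^ (α + 2))) * (m : ZMod (p ^ (α + 2))) * q ^ (α * 2)
            = (m : ZMod (p ^ (α + 2))) * q ^ (α * 2 + 1) := by rw [← hqdef]; ring
        rw [this, hq _ (by omega), mul_zero]
      rw [hz, zero_smul]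
    rw [t0, t1, t2, zero_add, add_zero]
  rw [h0, hC, smul_add, smul_smul]
  have hz : q ^ (α + 1) * q = 0 := by rw [← pow_succ]; exact hq _ (by omega)
  rw [hz, zero_smul, add_zero]
end

section
/- Let p be an odd prime and α ≥ 1 an integer. Let π₂ : GL₂(ℤ/p^{α+2}ℤ) → GL₂(ℤ/p^{α+1}ℤ) and π₁ : GL₂(ℤ/p^{α+1}ℤ) → GL₂(ℤ/p^αℤ) denote the natural reduction homomorphisms. If N' is a subgroup of GL₂(ℤ/p^{α+2}ℤ) such that π₂(N') contains ker π₁, then N' contains ker π₂. -/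
open Matrix Finset


-- divisibility key lemma
lemma key_dvd (p α : ℕ) (hp : p.Prime) (hodd : Odd p) (hα : 1 ≤ α)
    {k : ℕ} (hk2 : 2 ≤ k) (hkp : k ≤ p) :
    p ^ (α + 2) ∣ p.choose k * p ^ (α * k) := by
  have hp3 : 3 ≤ p := by
    obtain ⟨m, hm⟩ := hodd
    have := hp.two_le
    omega
  rcases eq_or_lt_of_le hkp with heq | hk
  · refine Dvd.dvd.mul_left (pow_dvd_pow p ?_) _
    nlinarith [heq]
  · have h1 : p ∣ p.choose k := hp.dvd_choose_self (by omega) hk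
    obtain ⟨c, hc⟩ := h1
    rw [hc]
    have : p ^ (α + 2) ∣ p * p ^ (α * k) := by
      rw [← pow_succ']
      exact pow_dvd_pow p (by nlinarith)
    calc p ^ (α+2) ∣ p * p ^ (α * k) := this
      _ ∣ p * c * p ^ (α * k) := mul_dvd_mul (dvd_mul_right p c) dvd_rfl
  
-- kernel of castHom
lemma zmod_ker {m n : ℕ} (hmn : m ∣ n) [NeZero n] (y : ZMod n)
    (hy : ZMod.castHom hmn (ZMod m) y = 0) : ∃ a : ZMod n, y = (m : ZMod n) * a := by
  rw [ZMod.castHom_apply, ← ZMod.natCast_val y] at hy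
  obtain ⟨c, hc⟩ := (ZMod.natCast_eq_zero_iff y.val m).mp hy
  refine ⟨(c : ZMod n), ?_⟩
  rw [← Nat.cast_mul, ← hc, ZMod.natCast_zmod_val]

lemma mat_ker {m n : ℕ} (hmn : m ∣ n) [NeZero n] (X : Matrix (Fin 2) (Fin 2) (ZMod n))
    (hX : X.map (ZMod.castHom hmn (ZMod m)) = 0) :
    ∃ A : Matrix (Fin 2) (Fin 2) (ZMod n), X = (m : ZMod n) • A := by
  have h' : ∀ i j, ZMod.castHom hmn (ZMod m) (X i j) = 0 := by
    intro i j
    have := congrFun (congrFun hX i) j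
    simpa [Matrix.map_apply] using this
  choose A hA using fun i j => zmod_ker hmn (X i j) (h' i j)
  exact ⟨Matrix.of A, by ext i j; simp [hA i j, Matrix.smul_apply]⟩

/-- Let `p` be an odd prime and `α ≥ 1`. Let
`π₂ : GL₂(ℤ/p^(α+2)ℤ) → GL₂(ℤ/p^(α+1)ℤ)` and `π₁ : GL₂(ℤ/p^(α+1)ℤ) → GL₂(ℤ/p^αℤ)` be the
natural reduction homomorphisms. If `N'` is a subgroup of `GL₂(ℤ/p^(α+2)ℤ)` such that
`π₂(N')` contains `ker π₁`, then `N'` contains `ker π₂`. -/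
theorem stmt2 (p α : ℕ) (hp : p.Prime) (hodd : Odd p) (hα : 1 ≤ α)
    (π₂ : GL (Fin 2) (ZMod (p ^ (α + 2))) →* GL (Fin 2) (ZMod (p ^ (α + 1))))
    (π₁ : GL (Fin 2) (ZMod (p ^ (α + 1))) →* GL (Fin 2) (ZMod (p ^ α)))
    (hπ₂ : π₂ = Matrix.GeneralLinearGroup.map
      (ZMod.castHom (pow_dvd_pow p (Nat.le_succ (α + 1))) (ZMod (p ^ (α + 1)))))
    (hπ₁ : π₁ = Matrix.GeneralLinearGroup.map
      (ZMod.castHom (pow_dvd_pow p (Nat.le_succ α)) (ZMod (p ^ α))))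
    (N' : Subgroup (GL (Fin 2) (ZMod (p ^ (α + 2)))))
    (h : π₁.ker ≤ Subgroup.map π₂ N') :
    π₂.ker ≤ N' := by
  have hppos := hp.pos
  haveI : NeZero (p ^ (α + 2)) := ⟨by positivity⟩
  haveI : NeZero (p ^ (α + 1)) := ⟨by positivity⟩
  set R2 := ZMod (p ^ (α + 2))
  set R1 := ZMod (p ^ (α + 1))
  set f2 := ZMod.castHom (pow_dvd_pow p (Nat.le_succ (α + 1))) (ZMod (p ^ (α + 1)))
  set f1 := ZMod.castHom (pow_dvd_pow p (Nat.le_succ α)) (ZMod (p ^ α))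
  subst hπ₂ hπ₁
  intro x hx
  rw [MonoidHom.mem_ker] at hx
  -- x.val.map f2 = 1
  have hX : (x : Matrix (Fin 2) (Fin 2) R2).map f2 = 1 := congrArg Units.val hx
  have hX0 : ((x : Matrix (Fin 2) (Fin 2) R2) - 1).map f2 = 0 := by
    have : ((x : Matrix (Fin 2) (Fin 2) R2) - 1).map f2
        = f2.mapMatrix ((x : Matrix (Fin 2) (Fin 2) R2) - 1) := rfl
    rw [this, map_sub, _root_.map_one]
    change (x : Matrix (Fin 2) (Fin 2) R2).map f2 - 1 = 0
    rw [hX, sub_self]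
  obtain ⟨A, hA⟩ := mat_ker (pow_dvd_pow p (Nat.le_succ (α + 1))) _ hX0
  -- x.val = 1 + p^(α+1) • A
  have hXeq : (x : Matrix (Fin 2) (Fin 2) R2) = 1 + ((p ^ (α + 1) : ℕ) : R2) • A := by
    rw [← hA]; abel
  -- build the unit U = 1 + p^α • Ā in GL₂(R1)
  set Ab : Matrix (Fin 2) (Fin 2) R1 := A.map f2 with hAb
  set c : R1 := ((p ^ α : ℕ) : R1) with hc
  set M : Matrix (Fin 2) (Fin 2) R1 := c • Ab with hM
  have hcc : c * c = 0 := by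
    rw [hc, ← Nat.cast_mul, ← pow_add, ZMod.natCast_eq_zero_iff]
    exact pow_dvd_pow p (by omega)
  have hMM : M * M = 0 := by
    rw [hM, smul_mul_smul_comm, hcc, zero_smul]
  have h1 : (1 + M) * (1 - M) = 1 := by
    have : (1 + M) * (1 - M) = 1 - M * M := by
      simp only [mul_sub, sub_mul, add_mul, mul_add, mul_one, one_mul]; abel
    rw [this, hMM, sub_zero]
  have h2 : (1 - M) * (1 + M) = 1 := by
    have : (1 - M) * (1 + M) = 1 - M * M := by
      simp only [mul_sub, sub_mul, add_mul, mul_add, mul_one, one_mul]; abel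
    rw [this, hMM, sub_zero]
  set U : GL (Fin 2) R1 := ⟨1 + M, 1 - M, h1, h2⟩ with hU
  -- U is in ker π₁
  have hUker : U ∈ (Matrix.GeneralLinearGroup.map f1).ker := by
    rw [MonoidHom.mem_ker]
    refine Units.ext ?_
    change (1 + M).map f1 = (1 : Matrix (Fin 2) (Fin 2) (ZMod (p ^ α)))
    have : (1 + M).map f1 = f1.mapMatrix (1 + M) := rfl
    rw [this, map_add, _root_.map_one]
    have hMmap : f1.mapMatrix M = 0 := by
      have hc0 : f1 c = 0 := by
        rw [hc, map_natCast, ZMod.natCast_eq_zero_iff]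
      ext i j
      simp [hM, RingHom.mapMatrix_apply, Matrix.map_apply, Matrix.smul_apply, _root_.map_mul, hc0]
    rw [hMmap, add_zero]
  obtain ⟨g, hgN, hg⟩ := h hUker
  -- g.val.map f2 = 1 + M
  have hG : (g : Matrix (Fin 2) (Fin 2) R2).map f2 = 1 + M := congrArg Units.val hg
  set ca : R2 := ((p ^ α : ℕ) : R2) with hca
  have hG0 : ((g : Matrix (Fin 2) (Fin 2) R2) - 1 - ca • A).map f2 = 0 := by
    have : ((g : Matrix (Fin 2) (Fin 2) R2) - 1 - ca • A).map f2
        = f2.mapMatrix ((g : Matrix (Fin 2) (Fin 2) R2) - 1 - ca • A) := rfl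
    rw [this, map_sub, map_sub, _root_.map_one]
    have hsmul : f2.mapMatrix (ca • A) = c • Ab := by
      have hfc : f2 ca = c := by rw [hca, map_natCast, hc]
      ext i j
      simp [RingHom.mapMatrix_apply, Matrix.map_apply, Matrix.smul_apply, _root_.map_mul, hfc,
        hAb]
    rw [hsmul]
    change (g : Matrix (Fin 2) (Fin 2) R2).map f2 - 1 - c • Ab = 0
    rw [hG, hM]
    abel
  obtain ⟨B, hB⟩ := mat_ker (pow_dvd_pow p (Nat.le_succ (α + 1))) _ hG0
  -- g.val = 1 + p^α • (A + p • B)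
  set C : Matrix (Fin 2) (Fin 2) R2 := A + (p : R2) • B with hC
  have hGeq : (g : Matrix (Fin 2) (Fin 2) R2) = 1 + ca • C := by
    have hcap : ca * (p : R2) = ((p ^ (α + 1) : ℕ) : R2) := by
      rw [hca, ← Nat.cast_mul, ← pow_succ]
    rw [hC, smul_add, smul_smul, hcap, ← hB]
    abel
  -- now compute g^p
  have hp3 : 3 ≤ p := by
    obtain ⟨m, hm⟩ := hodd
    have := hp.two_le
    omega
  set N : Matrix (Fin 2) (Fin 2) R2 := ca • C with hN
  have hmulnat : ∀ (X : Matrix (Fin 2) (Fin 2) R2) (n : ℕ),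
      X * (n : Matrix (Fin 2) (Fin 2) R2) = ((n : R2)) • X := by
    intro X n
    rw [← (Nat.cast_commute n X).eq, ← nsmul_eq_mul, ← Nat.cast_smul_eq_nsmul R2]
  have hpow : (g : Matrix (Fin 2) (Fin 2) R2) ^ p
      = 1 + ((p ^ (α + 1) : ℕ) : R2) • A := by
    rw [hGeq, add_comm (1 : Matrix (Fin 2) (Fin 2) R2) N]
    rw [Commute.add_pow (Commute.one_right N)]
    have hsplit : range (p + 1) = insert 0 (insert 1 (Ico 2 (p + 1))) := by
      ext m
      simp only [Finset.mem_range, Finset.mem_Ico, Finset.mem_insert]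
      omega
    rw [hsplit, Finset.sum_insert (by simp), Finset.sum_insert (by simp)]
    have hrest : ∑ m ∈ Ico 2 (p + 1),
        N ^ m * 1 ^ (p - m) * (p.choose m : Matrix (Fin 2) (Fin 2) R2) = 0 := by
      apply Finset.sum_eq_zero
      intro m hm
      rw [Finset.mem_Ico] at hm
      rw [one_pow, mul_one, hmulnat, hN, smul_pow, smul_smul]
      have hz : ((p.choose m : R2)) * ca ^ m = 0 := by
        rw [hca, ← Nat.cast_pow, ← Nat.cast_mul, ← pow_mul,
          ZMod.natCast_eq_zero_iff]
        exact key_dvd p α hp hodd hα hm.1 (by omega)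
      rw [hz, zero_smul]
    rw [hrest, add_zero]
    have hterm0 : N ^ 0 * 1 ^ (p - 0) * (p.choose 0 : Matrix (Fin 2) (Fin 2) R2) = 1 := by
      simp
      exact Nat.cast_one
    have hterm1 : N ^ 1 * 1 ^ (p - 1) * (p.choose 1 : Matrix (Fin 2) (Fin 2) R2)
        = ((p ^ (α + 1) : ℕ) : R2) • A := by
      rw [pow_one, one_pow, mul_one, Nat.choose_one_right, hmulnat, hN, smul_smul]
      have hpc : (p : R2) * ca = ((p ^ (α + 1) : ℕ) : R2) := by
        rw [hca, ← Nat.cast_mul, ← pow_succ']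
      rw [hpc, hC, smul_add, smul_smul]
      have hz2 : ((p ^ (α + 1) : ℕ) : R2) * (p : R2) = 0 := by
        rw [← Nat.cast_mul, ← pow_succ, ZMod.natCast_eq_zero_iff]
      rw [hz2, zero_smul, add_zero]
    rw [hterm0, hterm1]
  have hgp : g ^ p = x := by
    apply Units.ext
    rw [Units.val_pow_eq_pow_val, hpow, hXeq]
  exact hgp ▸ pow_mem hgN p
end

section
/- Let p be an odd prime and α ≥ 1 an integer. Write π₂ : GL₂(ℤ/p^{α+2}ℤ) → GL₂(ℤ/p^{α+1}ℤ) and π₁ : GL₂(ℤ/p^{α+1}ℤ) → GL₂(ℤ/p^αℤ) for the natural reduction maps. Let H be a subgroup of GL₂(ℤ/p^{α+2}ℤ) containing ker(π₁ ∘ π₂), and let N' ⊆ N be normal subgroups of H such that N = (H ∩ ker π₂)·N' and ker(π₁ ∘ π₂) ⊆ N. Then N' = N. -/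
open Matrix

open scoped Pointwise

section Aux

variable {p : ℕ}

/-- Scalar lemma: an element of `ZMod (p^b)` maps to zero in `ZMod (p^a)` iff it is a
multiple of `p^a`. -/
lemma aux_cast_zero_iff {a b : ℕ} [NeZero (p ^ b)] (hd : p ^ a ∣ p ^ b)
    (r : ZMod (p ^ b)) :
    ZMod.castHom hd (ZMod (p ^ a)) r = 0 ↔ ∃ s, r = (p : ZMod (p ^ b)) ^ a * s := by
  constructor
  · intro h
    have h1 : ((r.val : ℕ) : ZMod (p ^ a)) = 0 := by
      rwa [ZMod.natCast_val, ← ZMod.castHom_apply (h := hd)]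
    rw [ZMod.natCast_eq_zero_iff] at h1
    obtain ⟨t, ht⟩ := h1
    refine ⟨(t : ZMod (p ^ b)), ?_⟩
    have h2 : ((r.val : ℕ) : ZMod (p ^ b)) = r := ZMod.natCast_zmod_val r
    rw [← h2, ht]
    push_cast
    ring
  · rintro ⟨s, rfl⟩
    rw [_root_.map_mul, _root_.map_pow]
    have h3 : (ZMod.castHom hd (ZMod (p ^ a))) (p : ZMod (p ^ b)) = (p : ZMod (p ^ a)) := by
      simp
    rw [h3]
    have h4 : ((p : ZMod (p ^ a))) ^ a = ((p ^ a : ℕ) : ZMod (p ^ a)) := by push_cast; ring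
    rw [h4, ZMod.natCast_self, zero_mul]

/-- Kernel characterization for the reduction map on `GL₂`. -/
lemma aux_mem_ker_iff {a b : ℕ} [NeZero (p ^ b)] (hd : p ^ a ∣ p ^ b)
    (g : GL (Fin 2) (ZMod (p ^ b))) :
    g ∈ (Matrix.GeneralLinearGroup.map (n := Fin 2)
        (ZMod.castHom hd (ZMod (p ^ a)))).ker ↔
      ∃ E : Matrix (Fin 2) (Fin 2) (ZMod (p ^ b)),
        (g : Matrix (Fin 2) (Fin 2) (ZMod (p ^ b))) = 1 + ((p : ZMod (p ^ b)) ^ a) • E := by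
  set f := ZMod.castHom hd (ZMod (p ^ a)) with hf
  have hmem : g ∈ (Matrix.GeneralLinearGroup.map (n := Fin 2) f).ker ↔
      ∀ i j, f ((g : Matrix (Fin 2) (Fin 2) (ZMod (p ^ b))) i j)
        = (1 : Matrix (Fin 2) (Fin 2) (ZMod (p ^ a))) i j := by
    rw [MonoidHom.mem_ker, Units.ext_iff, ← Matrix.ext_iff]
    simp only [Units.val_one]
    exact Iff.rfl
  rw [hmem]
  constructor
  · intro h
    have key : ∀ i j, ∃ s, (g : Matrix (Fin 2) (Fin 2) (ZMod (p ^ b))) i j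
        - (1 : Matrix (Fin 2) (Fin 2) (ZMod (p ^ b))) i j = (p : ZMod (p ^ b)) ^ a * s := by
      intro i j
      rw [← aux_cast_zero_iff hd]
      rw [map_sub, h i j]
      have h1 : f ((1 : Matrix (Fin 2) (Fin 2) (ZMod (p ^ b))) i j)
          = (1 : Matrix (Fin 2) (Fin 2) (ZMod (p ^ a))) i j := by
        by_cases hij : i = j <;> simp [Matrix.one_apply, hij]
      rw [h1, sub_self]
    choose E hE using fun i => key i
    refine ⟨Matrix.of (fun i j => E i j), ?_⟩
    ext i j
    have := hE i j
    simp only [Matrix.add_apply, Matrix.smul_apply, Matrix.of_apply, smul_eq_mul]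
    linear_combination this
  · rintro ⟨E, hE⟩
    intro i j
    rw [hE]
    simp only [Matrix.add_apply, Matrix.smul_apply, smul_eq_mul, _root_.map_add,
      _root_.map_mul, _root_.map_pow]
    have h1 : f ((1 : Matrix (Fin 2) (Fin 2) (ZMod (p ^ b))) i j)
        = (1 : Matrix (Fin 2) (Fin 2) (ZMod (p ^ a))) i j := by
      by_cases hij : i = j <;> simp [Matrix.one_apply, hij]
    have h2 : (f (p : ZMod (p ^ b))) ^ a = 0 := by
      have h3 : f (p : ZMod (p ^ b)) = (p : ZMod (p ^ a)) := by simp [hf]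
      rw [h3, ← Nat.cast_pow, ZMod.natCast_self]
    rw [h1, h2, zero_mul, add_zero]

/-- Binomial lemma: `(1 + c • C)^p = 1 + (p*c) • C` when `p*c² = 0` and `c³ = 0`, `p` odd. -/
lemma aux_pow_p {R : Type*} [CommRing R] (hp : p.Prime) (hodd : Odd p) (c : R)
    (C : Matrix (Fin 2) (Fin 2) R) (h2 : (p : R) * c ^ 2 = 0) (h3 : c ^ 3 = 0) :
    (1 + c • C) ^ p = 1 + ((p : R) * c) • C := by
  set M : Matrix (Fin 2) (Fin 2) R := c • C with hM
  have hM3 : M ^ 3 = 0 := by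
    rw [hM, smul_pow, h3, zero_smul]
  have hbin : (M + 1) ^ p = ∑ k ∈ Finset.range (p + 1), M ^ k * 1 ^ (p - k) * (p.choose k) :=
    Commute.add_pow (Commute.one_right M) p
  have hsub : ∑ k ∈ Finset.range (p + 1), M ^ k * 1 ^ (p - k) * (p.choose k)
      = ∑ k ∈ Finset.range 3, M ^ k * 1 ^ (p - k) * (p.choose k) := by
    symm
    apply Finset.sum_subset
    · apply Finset.range_subset_range.mpr
      have := hp.two_le
      omega
    · intro k _ hk
      simp only [Finset.mem_range, not_lt] at hk
      have hMk : M ^ k = 0 := by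
        have : M ^ k = M ^ 3 * M ^ (k - 3) := by
          rw [← pow_add]; congr 1; omega
        rw [this, hM3, zero_mul]
      rw [hMk, zero_mul, zero_mul]
  have hchoose2 : ((p.choose 2 : ℕ) : R) * c ^ 2 = 0 := by
    obtain ⟨m, hm⟩ : ∃ m, p - 1 = 2 * m := by
      obtain ⟨l, hl⟩ := hodd
      exact ⟨l, by omega⟩
    have hdvd : (2 : ℕ) ∣ 2 * m := ⟨m, rfl⟩
    have h2m : 2 * m / 2 = m := by omega
    have hc : p.choose 2 = p * m := by
      rw [Nat.choose_two_right, hm, Nat.mul_div_assoc _ hdvd, h2m]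
    rw [hc]
    push_cast
    calc ((p : R) * m) * c ^ 2 = (m : R) * ((p : R) * c ^ 2) := by ring
    _ = 0 := by rw [h2, mul_zero]
  have hterm2 : M ^ 2 * ((p.choose 2 : ℕ) : Matrix (Fin 2) (Fin 2) R) = 0 := by
    have h1 : M ^ 2 * ((p.choose 2 : ℕ) : Matrix (Fin 2) (Fin 2) R) = (p.choose 2) • M ^ 2 := by
      rw [nsmul_eq_mul]
      exact ((Nat.cast_commute (p.choose 2) (M ^ 2)).eq).symm
    rw [h1, hM, smul_pow, ← Nat.cast_smul_eq_nsmul R, smul_smul, hchoose2, zero_smul]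
  have hfin : M * ((p : ℕ) : Matrix (Fin 2) (Fin 2) R) = (p : R) • M := by
    rw [← (Nat.cast_commute p M).eq, ← nsmul_eq_mul]
    exact (Nat.cast_smul_eq_nsmul R p M).symm
  have hmain : (1 + M) ^ p = 1 + (p : R) • M := by
    rw [add_comm (1 : Matrix (Fin 2) (Fin 2) R) M, hbin, hsub]
    rw [Finset.sum_range_succ, Finset.sum_range_succ, Finset.sum_range_one]
    simp only [pow_zero, pow_one, one_pow, one_mul, mul_one, Nat.choose_zero_right,
      Nat.choose_one_right, Nat.cast_one]
    rw [hterm2, add_zero, hfin]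
  rw [hmain, hM, smul_smul]

end Aux

/-- Let `p` be an odd prime and `α ≥ 1`, with reduction maps
`π₂ : GL₂(ℤ/p^(α+2)ℤ) → GL₂(ℤ/p^(α+1)ℤ)` and `π₁ : GL₂(ℤ/p^(α+1)ℤ) → GL₂(ℤ/p^αℤ)`.
Let `H` be a subgroup of `GL₂(ℤ/p^(α+2)ℤ)` containing `ker (π₁ ∘ π₂)`, and let `N' ⊆ N`
be normal subgroups of `H` such that `N = (H ∩ ker π₂) · N'` and `ker (π₁ ∘ π₂) ⊆ N`.
Then `N' = N`. -/
theorem stmt3 (p α : ℕ) (hp : p.Prime) (hodd : Odd p) (hα : 1 ≤ α)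
    (π₂ : GL (Fin 2) (ZMod (p ^ (α + 2))) →* GL (Fin 2) (ZMod (p ^ (α + 1))))
    (π₁ : GL (Fin 2) (ZMod (p ^ (α + 1))) →* GL (Fin 2) (ZMod (p ^ α)))
    (hπ₂ : π₂ = Matrix.GeneralLinearGroup.map
      (ZMod.castHom (pow_dvd_pow p (Nat.le_succ (α + 1))) (ZMod (p ^ (α + 1)))))
    (hπ₁ : π₁ = Matrix.GeneralLinearGroup.map
      (ZMod.castHom (pow_dvd_pow p (Nat.le_succ α)) (ZMod (p ^ α))))
    (H N N' : Subgroup (GL (Fin 2) (ZMod (p ^ (α + 2)))))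
    (hHker : (π₁.comp π₂).ker ≤ H)
    (hN'N : N' ≤ N) (hNH : N ≤ H)
    (hN'normal : (N'.subgroupOf H).Normal) (hNnormal : (N.subgroupOf H).Normal)
    (hprod : (N : Set (GL (Fin 2) (ZMod (p ^ (α + 2)))))
      = ((H ⊓ π₂.ker : Subgroup (GL (Fin 2) (ZMod (p ^ (α + 2))))) : Set (GL (Fin 2) (ZMod (p ^ (α + 2)))))
        * (N' : Set (GL (Fin 2) (ZMod (p ^ (α + 2))))))
    (hkerN : (π₁.comp π₂).ker ≤ N) :
    N' = N := by
  have hp2 := hp.two_le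
  set R := ZMod (p ^ (α + 2)) with hR
  haveI : NeZero (p ^ (α + 2)) := ⟨pow_ne_zero _ hp.pos.ne'⟩
  have hpzero : ∀ t : ℕ, α + 2 ≤ t → (p : R) ^ t = 0 := by
    intro t ht
    show ((p : ZMod (p ^ (α + 2)))) ^ t = 0
    have h1 : ((p ^ t : ℕ) : ZMod (p ^ (α + 2))) = 0 := by
      rw [ZMod.natCast_eq_zero_iff]
      exact pow_dvd_pow p ht
    push_cast at h1
    exact h1
  have hcomp : π₁.comp π₂ = Matrix.GeneralLinearGroup.map (n := Fin 2)
      (ZMod.castHom (pow_dvd_pow p (by omega : α ≤ α + 2)) (ZMod (p ^ α))) := by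
    rw [hπ₁, hπ₂, ← Matrix.GeneralLinearGroup.map_comp, ZMod.castHom_comp]
  -- main claim: H ⊓ ker π₂ ≤ N'
  have claim : (H ⊓ π₂.ker : Subgroup _) ≤ N' := by
    intro y hy
    obtain ⟨hyH, hyker⟩ := Subgroup.mem_inf.mp hy
    obtain ⟨A, hA⟩ := (aux_mem_ker_iff _ y).mp (hπ₂ ▸ hyker)
    set M : Matrix (Fin 2) (Fin 2) R := ((p : R) ^ α) • A with hMdef
    have hM3 : M ^ 3 = 0 := by
      rw [hMdef, smul_pow, ← pow_mul, hpzero (α * 3) (by omega), zero_smul]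
    have hinv1 : (1 + M) * (1 - M + M ^ 2) = 1 := by
      have h : (1 + M) * (1 - M + M ^ 2) = 1 + M ^ 3 := by
        have key : ∀ (S : Type) [Ring S] (m : S), (1 + m) * (1 - m + m ^ 2) = 1 + m ^ 3 := by
          intros; noncomm_ring
        exact key _ M
      rw [h, hM3, add_zero (1 : Matrix (Fin 2) (Fin 2) (ZMod (p ^ (α + 2))))]
    have hinv2 : (1 - M + M ^ 2) * (1 + M) = 1 := by
      have h : (1 - M + M ^ 2) * (1 + M) = 1 + M ^ 3 := by
        have key : ∀ (S : Type) [Ring S] (m : S), (1 - m + m ^ 2) * (1 + m) = 1 + m ^ 3 := by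
          intros; noncomm_ring
        exact key _ M
      rw [h, hM3, add_zero (1 : Matrix (Fin 2) (Fin 2) (ZMod (p ^ (α + 2))))]
    set x : GL (Fin 2) R := ⟨1 + M, 1 - M + M ^ 2, hinv1, hinv2⟩ with hxdef
    have hxval : (x : Matrix (Fin 2) (Fin 2) R) = 1 + M := rfl
    have hxker : x ∈ (π₁.comp π₂).ker := by
      rw [hcomp, aux_mem_ker_iff]
      exact ⟨A, rfl⟩
    have hxp : x ^ p = y := by
      rw [Units.ext_iff, Units.val_pow_eq_pow_val, hxval, hMdef,
        aux_pow_p hp hodd _ A ?h2 ?h3]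
      case h2 => rw [← pow_mul, ← pow_succ']; exact hpzero (α * 2 + 1) (by omega)
      case h3 => rw [← pow_mul]; exact hpzero (α * 3) (by omega)
      rw [hA, ← pow_succ']
    have hxN : x ∈ N := hkerN hxker
    have hxset : x ∈ (N : Set (GL (Fin 2) R)) := hxN
    rw [hprod] at hxset
    obtain ⟨k, hk, n, hn, hkn⟩ := hxset
    obtain ⟨hkH, hkker⟩ := Subgroup.mem_inf.mp hk
    obtain ⟨D, hD⟩ := (aux_mem_ker_iff _ k).mp (hπ₂ ▸ hkker)
    have hkker' : k ∈ (π₁.comp π₂).ker := by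
      rw [MonoidHom.mem_ker, MonoidHom.comp_apply, MonoidHom.mem_ker.mp hkker, _root_.map_one]
    have hnker : n ∈ (π₁.comp π₂).ker := by
      have hn' : n = k⁻¹ * x := by rw [← hkn]; group
      rw [hn']
      exact mul_mem (inv_mem hkker') hxker
    obtain ⟨E, hE⟩ := (aux_mem_ker_iff _ n).mp (hcomp ▸ hnker)
    have hcomm : Commute k n := by
      rw [Commute, SemiconjBy, Units.ext_iff, Units.val_mul, Units.val_mul, hD, hE]
      have hz : ((p : R) ^ (α + 1)) * ((p : R) ^ α) = 0 := by
        rw [← pow_add]; exact hpzero (α + 1 + α) (by omega)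
      have expand : ∀ (c d : R) (X Y : Matrix (Fin 2) (Fin 2) R),
          (1 + c • X) * (1 + d • Y) = 1 + c • X + d • Y + (c * d) • (X * Y) := by
        intro c d X Y
        rw [mul_add, add_mul, add_mul, one_mul, one_mul, mul_one, smul_mul_smul_comm]
        abel
      rw [expand, expand, hz, mul_comm ((p : R) ^ α), hz, zero_smul, zero_smul]
      abel
    have hkp : k ^ p = 1 := by
      rw [Units.ext_iff, Units.val_pow_eq_pow_val, hD,
        aux_pow_p hp hodd _ D ?h2 ?h3]
      case h2 => rw [← pow_mul, ← pow_succ']; exact hpzero _ (by omega)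
      case h3 => rw [← pow_mul]; exact hpzero _ (by omega)
      rw [← pow_succ', hpzero (α + 2) le_rfl, zero_smul, add_zero, Units.val_one]
    have hyn : y = n ^ p := by
      rw [← hxp, ← hkn, hcomm.mul_pow, hkp, one_mul]
    rw [hyn]
    exact pow_mem hn p
  apply le_antisymm hN'N
  intro z hz
  have hzset : z ∈ (N : Set (GL (Fin 2) R)) := hz
  rw [hprod] at hzset
  obtain ⟨k, hk, n, hn, hkn⟩ := hzset
  rw [← hkn]
  exact mul_mem (claim hk) hn
end

section
/- Fix an algebraic closure of ℚ and let K ⊆ L and M be finite extensions of ℚ inside it, with L/ℚ, K/ℚ and M/ℚ all Galois. Then the degree [L ∩ M : K ∩ M] divides the degree [L : K]. In particular, if [L : K] is a power of a prime p, then so is [L ∩ M : K ∩ M]. -/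
open IntermediateField Module

-- index identity: for K normal, (H ⊓ K).index * (H ⊔ K).index = H.index * K.index
lemma aux_index {G : Type*} [Group G] (H K : Subgroup G) [K.Normal] :
    (H ⊓ K).index * (H ⊔ K).index = H.index * K.index := by
  have h1 : (H ⊓ K).relIndex H * H.index = (H ⊓ K).index :=
    Subgroup.relIndex_mul_index inf_le_left
  have h2 : K.relIndex (H ⊔ K) * (H ⊔ K).index = K.index :=
    Subgroup.relIndex_mul_index le_sup_right
  have h3 : (H ⊓ K).relIndex H = K.relIndex H := Subgroup.inf_relIndex_left H K
  have h4 : K.relIndex (H ⊔ K) = K.relIndex H := Subgroup.relIndex_sup_right H K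
  calc (H ⊓ K).index * (H ⊔ K).index
      = (K.relIndex H * H.index) * (H ⊔ K).index := by rw [← h1, h3]
    _ = (K.relIndex (H ⊔ K) * (H ⊔ K).index) * H.index := by rw [h4]; ring
    _ = H.index * K.index := by rw [h2]; ring

lemma aux_fixing_index {F N : Type*} [Field F] [Field N] [Algebra F N]
    [FiniteDimensional F N] [IsGalois F N] (X : IntermediateField F N) :
    X.fixingSubgroup.index = finrank F X := by
  classical
  have hc : Nat.card X.fixingSubgroup * X.fixingSubgroup.index = Nat.card (N ≃ₐ[F] N) :=
    Subgroup.card_mul_index _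
  have h1 : Nat.card X.fixingSubgroup = finrank X N := by
    rw [IsGalois.card_fixingSubgroup_eq_finrank]
  have h2 : Nat.card (N ≃ₐ[F] N) = finrank F N := by
    rw [IsGalois.card_aut_eq_finrank]
  have h3 : finrank F X * finrank X N = finrank F N := finrank_mul_finrank F X N
  have hpos : 0 < finrank X N := finrank_pos
  apply Nat.eq_of_mul_eq_mul_right hpos
  rw [mul_comm] at hc
  rw [← h1, hc, h2, h1, h3]

lemma aux_fixing_sup {F N : Type*} [Field F] [Field N] [Algebra F N]
    (A B : IntermediateField F N) :
    (A ⊔ B).fixingSubgroup = A.fixingSubgroup ⊓ B.fixingSubgroup := by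
  apply le_antisymm
  · exact le_inf (fixingSubgroup_antitone le_sup_left) (fixingSubgroup_antitone le_sup_right)
  · rw [← IntermediateField.le_iff_le]
    exact sup_le ((IntermediateField.le_iff_le _ _).2 inf_le_left)
      ((IntermediateField.le_iff_le _ _).2 inf_le_right)

lemma aux_fixedField_antitone {F N : Type*} [Field F] [Field N] [Algebra F N]
    {H K : Subgroup (N ≃ₐ[F] N)} (h : H ≤ K) : fixedField K ≤ fixedField H := by
  rw [IntermediateField.le_iff_le]
  exact h.trans ((IntermediateField.le_iff_le _ _).1 le_rfl)

lemma aux_fixed_inf {F N : Type*} [Field F] [Field N] [Algebra F N]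
    (H K : Subgroup (N ≃ₐ[F] N)) :
    fixedField (H ⊔ K) = fixedField H ⊓ fixedField K := by
  apply le_antisymm
  · exact le_inf (aux_fixedField_antitone le_sup_left) (aux_fixedField_antitone le_sup_right)
  · rw [IntermediateField.le_iff_le]
    exact sup_le ((IntermediateField.le_iff_le _ _).1 inf_le_left)
      ((IntermediateField.le_iff_le _ _).1 inf_le_right)

lemma aux_fixing_inf {F N : Type*} [Field F] [Field N] [Algebra F N]
    [FiniteDimensional F N] [IsGalois F N] (A B : IntermediateField F N) :
    (A ⊓ B).fixingSubgroup = A.fixingSubgroup ⊔ B.fixingSubgroup := by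
  conv_lhs => rw [← IsGalois.fixedField_fixingSubgroup A, ← IsGalois.fixedField_fixingSubgroup B,
    ← aux_fixed_inf, fixingSubgroup_fixedField]

lemma key_inner {F N : Type*} [Field F] [Field N] [Algebra F N]
    [FiniteDimensional F N] [IsGalois F N] (A B : IntermediateField F N)
    [IsGalois F A] [IsGalois F B] :
    finrank F ↥(A ⊔ B) * finrank F ↥(A ⊓ B) = finrank F A * finrank F B := by
  rw [← aux_fixing_index A, ← aux_fixing_index B, ← aux_fixing_index (A ⊔ B),
    ← aux_fixing_index (A ⊓ B), aux_fixing_sup, aux_fixing_inf]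
  exact aux_index A.fixingSubgroup B.fixingSubgroup

lemma key {F Ω : Type*} [Field F] [Field Ω] [Algebra F Ω]
    (A B : IntermediateField F Ω)
    [FiniteDimensional F A] [FiniteDimensional F B] [IsGalois F A] [IsGalois F B] :
    finrank F ↥(A ⊔ B) * finrank F ↥(A ⊓ B) = finrank F A * finrank F B := by
  set N : IntermediateField F Ω := A ⊔ B with hN
  have hAN : A ≤ N := le_sup_left
  have hBN : B ≤ N := le_sup_right
  set A' : IntermediateField F N := A.comap N.val with hA'
  set B' : IntermediateField F N := B.comap N.val with hB'
  have hrange : N.val.fieldRange = N := fieldRange_val N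
  have hmapA : A'.map N.val = A := map_comap_eq_self (by rw [hrange]; exact hAN)
  have hmapB : B'.map N.val = B := map_comap_eq_self (by rw [hrange]; exact hBN)
  have hmapI : (A' ⊓ B').map N.val = A ⊓ B := by
    have : A' ⊓ B' = (A ⊓ B).comap N.val := by
      rw [hA', hB']; exact ((gc_map_comap N.val).u_inf).symm
    rw [this]
    exact map_comap_eq_self (by rw [hrange]; exact inf_le_of_left_le hAN)
  have hsup : A' ⊔ B' = ⊤ := by
    apply map_injective N.val
    rw [IntermediateField.map_sup, hmapA, hmapB, ← hN, ← AlgHom.fieldRange_eq_map, hrange]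
  have eA : ↥A' ≃ₐ[F] ↥A := (equivMap A' N.val).trans (equivOfEq hmapA)
  have eB : ↥B' ≃ₐ[F] ↥B := (equivMap B' N.val).trans (equivOfEq hmapB)
  have eI : ↥(A' ⊓ B') ≃ₐ[F] ↥(A ⊓ B) := (equivMap (A' ⊓ B') N.val).trans (equivOfEq hmapI)
  haveI := (AlgEquiv.transfer_galois eA).mpr (inferInstanceAs (IsGalois F A))
  haveI := (AlgEquiv.transfer_galois eB).mpr (inferInstanceAs (IsGalois F B))
  haveI := eA.symm.toLinearEquiv.finiteDimensional
  haveI := eB.symm.toLinearEquiv.finiteDimensional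
  haveI : FiniteDimensional F ↥N := inferInstanceAs (FiniteDimensional F ↥(A ⊔ B))
  have h := key_inner A' B'
  rw [hsup, eA.toLinearEquiv.finrank_eq, eB.toLinearEquiv.finrank_eq,
    eI.toLinearEquiv.finrank_eq] at h
  rw [← h, IntermediateField.finrank_top']

/-- Let `K ⊆ L` and `M` be finite extensions of `ℚ` inside a fixed algebraic
closure, all Galois over `ℚ`. Then `[L ∩ M : K ∩ M]` divides `[L : K]`. In particular, if
`[L : K]` is a power of a prime `p`, then so is `[L ∩ M : K ∩ M]`. -/
theorem stmt12 (K L M : IntermediateField ℚ (AlgebraicClosure ℚ)) (hKL : K ≤ L)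
    [FiniteDimensional ℚ K] [FiniteDimensional ℚ L] [FiniteDimensional ℚ M]
    [IsGalois ℚ K] [IsGalois ℚ L] [IsGalois ℚ M] :
    Module.finrank ↥(K ⊓ M) ↥(IntermediateField.extendScalars (inf_le_inf_right M hKL))
        ∣ Module.finrank ↥K ↥(IntermediateField.extendScalars hKL)
      ∧ ∀ p n : ℕ, p.Prime →
          Module.finrank ↥K ↥(IntermediateField.extendScalars hKL) = p ^ n →
          ∃ m : ℕ,
            Module.finrank ↥(K ⊓ M) ↥(IntermediateField.extendScalars (inf_le_inf_right M hKL))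
              = p ^ m := by
  set E : IntermediateField ℚ (AlgebraicClosure ℚ) := L ⊓ M with hE
  have hKE : K ⊓ E = K ⊓ M := by
    rw [hE, ← inf_assoc, inf_eq_left.2 hKL]
  have hdvd : Module.finrank ↥(K ⊓ M) ↥(IntermediateField.extendScalars (inf_le_inf_right M hKL))
      ∣ Module.finrank ↥K ↥(IntermediateField.extendScalars hKL) := by
    rw [← relfinrank_eq_finrank_of_le, ← relfinrank_eq_finrank_of_le]
    -- LHS = relfinrank (K ⊓ M) E = relfinrank K E
    have hLHS : relfinrank (K ⊓ M) E = relfinrank K E := by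
      rw [← hKE, inf_relfinrank_right]
    have hEsub : E ≤ L := inf_le_left
    have hchain : relfinrank K (K ⊔ E) * relfinrank (K ⊔ E) L = relfinrank K L :=
      relfinrank_mul_relfinrank le_sup_left (sup_le hKL hEsub)
    have hkey : finrank ℚ ↥(K ⊔ E) * finrank ℚ ↥(K ⊓ E) = finrank ℚ K * finrank ℚ E :=
      @key _ _ _ _ _ K E _ _ (by assumption)
        (@FiniteGaloisIntermediateField.instIsGaloisSubtypeMemIntermediateFieldMin _ _ _ _ _
          L M ‹_› ‹_›)
    have h1 : finrank ℚ ↥(K ⊓ E) * relfinrank (K ⊓ E) E = finrank ℚ E :=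
      finrank_bot_mul_relfinrank inf_le_right
    have h2 : finrank ℚ K * relfinrank K (K ⊔ E) = finrank ℚ ↥(K ⊔ E) :=
      finrank_bot_mul_relfinrank le_sup_left
    have heq : relfinrank K E = relfinrank K (K ⊔ E) := by
      have hinf : relfinrank (K ⊓ E) E = relfinrank K E := inf_relfinrank_right K E
      have ha : 0 < finrank ℚ K := finrank_pos
      have hi : 0 < finrank ℚ ↥(K ⊓ E) := by
        rw [hKE]; exact finrank_pos
      have hx : finrank ℚ ↥(K ⊓ E) * relfinrank K E = finrank ℚ E := by
        rw [← hinf]; exact h1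
      have hmain : finrank ℚ K * (finrank ℚ ↥(K ⊓ E) * relfinrank K E)
          = finrank ℚ K * (finrank ℚ ↥(K ⊓ E) * relfinrank K (K ⊔ E)) := by
        calc finrank ℚ K * (finrank ℚ ↥(K ⊓ E) * relfinrank K E)
            = finrank ℚ K * finrank ℚ E := by rw [hx]
          _ = finrank ℚ ↥(K ⊔ E) * finrank ℚ ↥(K ⊓ E) := hkey.symm
          _ = (finrank ℚ K * relfinrank K (K ⊔ E)) * finrank ℚ ↥(K ⊓ E) := by rw [h2]
          _ = finrank ℚ K * (finrank ℚ ↥(K ⊓ E) * relfinrank K (K ⊔ E)) := by ring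
      have := Nat.eq_of_mul_eq_mul_left ha hmain
      exact Nat.eq_of_mul_eq_mul_left hi this
    rw [hLHS, heq]
    exact Dvd.intro _ hchain
  refine ⟨hdvd, fun p n hp hpn => ?_⟩
  rw [hpn] at hdvd
  obtain ⟨m, _, hm⟩ := (Nat.dvd_prime_pow hp).1 hdvd
  exact ⟨m, hm⟩
end
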